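/- arXiv:2509.16156 — 2 statements merged into one kernel-verified Lean document; each statement's English description precedes it below -/
import Mathlib

section
/- Let Q be a real symmetric traceless 3×3 matrix, and consider the function ω : S² → ℝ on the unit sphere S² ⊂ ℝ³ given by ω(x) = xᵀQx. Assume ω is normalized in L², i.e. ∫_{S²} ω(x)² dS = 1. Then there exist a rotation R ∈ SO(3) and real numbers A, B with A² + B² = 1 and 3/7 ≤ A² such that for every x ∈ S² one has ω(Rx) = A·Y_{2,0}(x) + B·Y_{2,2}(x). -/
open Real Matrix

/-- The point of the unit sphere `S² ⊂ ℝ³` with spherical coordinates `(θ, φ)`. -/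
noncomputable def sphPoint (θ φ : ℝ) : Fin 3 → ℝ :=
  ![Real.sin θ * Real.cos φ, Real.sin θ * Real.sin φ, Real.cos θ]

/-- The real spherical harmonic `Y_{2,0}` in Cartesian coordinates. -/
noncomputable def Y20 (x : Fin 3 → ℝ) : ℝ :=
  Real.sqrt (5 / (16 * π)) * (3 * (x 2) ^ 2 - 1)

/-- The real spherical harmonic `Y_{2,2}` in Cartesian coordinates. -/
noncomputable def Y22 (x : Fin 3 → ℝ) : ℝ :=
  Real.sqrt (15 / (16 * π)) * ((x 0) ^ 2 - (x 1) ^ 2)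

/-!
The integral of `(xᵀQx)²` over the sphere is computed from the trigonometric moments
`∫ sin^m θ cos^n θ` and equals `(4π/15)((tr Q)² + 2 tr Q²)`; for traceless `Q` the normalization
says `(8π/15) Σ νᵢ² = 1` for the eigenvalues `ν` of `Q`. Diagonalizing `Q` by a rotation that puts
the eigenvalue of largest modulus last, `xᵀQx = ν₀x₀² + ν₁x₁² + ν₂x₂²` is on the sphere the
combination of `Y_{2,0}` and `Y_{2,2}` with coefficients proportional to `ν₂` and `ν₀ - ν₁`.
Since `ν₀ + ν₁ + ν₂ = 0` and `|ν₀|, |ν₁| ≤ |ν₂|`, the entries `ν₀, ν₁` have the same sign, so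
`Σ νᵢ² ≤ 2ν₂²`, which gives `A² ≥ 3/4`.
-/

section TrigonometricMoments

open intervalIntegral

theorem integral_sin_pow_mul_cos_pow_odd_eq_zero {a b : ℝ} (h : sin a = sin b) (m n : ℕ) :
    ∫ x in a..b, sin x ^ m * cos x ^ (2 * n + 1) = 0 := by
  rw [integral_sin_pow_mul_cos_pow_odd, h, integral_same]

theorem integral_sin_pow_odd_mul_cos_pow_eq_zero {a b : ℝ} (h : cos a = cos b) (m n : ℕ) :
    ∫ x in a..b, sin x ^ (2 * m + 1) * cos x ^ n = 0 := by
  rw [integral_sin_pow_odd_mul_cos_pow, h, integral_same]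

theorem integral_sin_cos_quadratic_sq_mul_sin (p q c : ℝ) :
    ∫ θ in (0:ℝ)..π, (p * sin θ ^ 2 + 2 * q * sin θ * cos θ + c * cos θ ^ 2) ^ 2 * sin θ
      = 16 / 15 * p ^ 2 + 16 / 15 * q ^ 2 + 8 / 15 * p * c + 2 / 5 * c ^ 2 := by
  have expand : ∀ θ, (p * sin θ ^ 2 + 2 * q * sin θ * cos θ + c * cos θ ^ 2) ^ 2 * sin θ
      = p ^ 2 * (sin θ ^ (2 * 2 + 1) * cos θ ^ 0)
        + (4 * q ^ 2 + 2 * p * c) * (sin θ ^ (2 * 1 + 1) * cos θ ^ 2)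
        + c ^ 2 * (sin θ ^ (2 * 0 + 1) * cos θ ^ 4)
        + (4 * p * q * (sin θ ^ 4 * cos θ ^ (2 * 0 + 1))
          + 4 * q * c * (sin θ ^ 2 * cos θ ^ (2 * 1 + 1))) := by
    intro θ; ring
  have expand_substituted : ∀ u : ℝ, u ^ 0 * (1 - u ^ 2) ^ 2 = 1 - 2 * u ^ 2 + u ^ 4 ∧
      u ^ 2 * (1 - u ^ 2) ^ 1 = u ^ 2 - u ^ 4 ∧ u ^ 4 * (1 - u ^ 2) ^ 0 = u ^ 4 := by
    intro u; refine ⟨?_, ?_, ?_⟩ <;> ring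
  simp (disch := apply Continuous.intervalIntegrable; fun_prop) only [expand, integral_add,
    integral_const_mul, integral_sin_pow_mul_cos_pow_odd_eq_zero (show sin 0 = sin π by simp),
    integral_sin_pow_odd_mul_cos_pow, cos_zero, cos_pi, expand_substituted, integral_sub,
    integral_pow, integral_const]
  norm_num
  ring

theorem integral_circle_moments (a b c d e f : ℝ) :
    ∫ φ in (0:ℝ)..(2 * π),
      (16 / 15 * (a * cos φ ^ 2 + b * sin φ ^ 2 + 2 * d * cos φ * sin φ) ^ 2
        + 16 / 15 * (e * cos φ + f * sin φ) ^ 2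
        + 8 / 15 * (a * cos φ ^ 2 + b * sin φ ^ 2 + 2 * d * cos φ * sin φ) * c + 2 / 5 * c ^ 2)
      = 4 * π / 15 *
        ((a + b + c) ^ 2 + 2 * (a ^ 2 + b ^ 2 + c ^ 2 + 2 * (d ^ 2 + e ^ 2 + f ^ 2))) := by
  have expand : ∀ φ, 16 / 15 * (a * cos φ ^ 2 + b * sin φ ^ 2 + 2 * d * cos φ * sin φ) ^ 2
      + 16 / 15 * (e * cos φ + f * sin φ) ^ 2
      + 8 / 15 * (a * cos φ ^ 2 + b * sin φ ^ 2 + 2 * d * cos φ * sin φ) * c + 2 / 5 * c ^ 2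
      = 16 / 15 * a ^ 2 * cos φ ^ 4 + 16 / 15 * b ^ 2 * sin φ ^ 4
        + 16 / 15 * (2 * a * b + 4 * d ^ 2) * (sin φ ^ 2 * cos φ ^ 2)
        + (16 / 15 * e ^ 2 + 8 / 15 * a * c) * cos φ ^ 2
        + (16 / 15 * f ^ 2 + 8 / 15 * b * c) * sin φ ^ 2 + 2 / 5 * c ^ 2
        + (64 / 15 * a * d * (sin φ ^ (2 * 0 + 1) * cos φ ^ 3)
          + 64 / 15 * b * d * (sin φ ^ (2 * 1 + 1) * cos φ ^ 1)
          + (32 / 15 * e * f + 16 / 15 * c * d) * (sin φ ^ (2 * 0 + 1) * cos φ ^ 1)) := by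
    intro φ; ring
  have sin_eight_pi : sin (4 * (2 * π)) = 0 := by
    rw [show 4 * (2 * π) = (8 : ℕ) * π by push_cast; ring, sin_nat_mul_pi]
  simp (disch := apply Continuous.intervalIntegrable; fun_prop) only [expand, integral_add,
    integral_const_mul, integral_const,
    integral_sin_pow_odd_mul_cos_pow_eq_zero (show cos 0 = cos (2 * π) by simp),
    integral_cos_pow, integral_sin_pow, integral_sin_sq_mul_cos_sq, sin_eight_pi]
  norm_num
  ring

end TrigonometricMoments

theorem sphPoint_dotProduct_mulVec {Q : Matrix (Fin 3) (Fin 3) ℝ} (hQ : Qᵀ = Q) (θ φ : ℝ) :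
    sphPoint θ φ ⬝ᵥ Q *ᵥ sphPoint θ φ
      = (Q 0 0 * cos φ ^ 2 + Q 1 1 * sin φ ^ 2 + 2 * Q 0 1 * cos φ * sin φ) * sin θ ^ 2
        + 2 * (Q 0 2 * cos φ + Q 1 2 * sin φ) * sin θ * cos θ + Q 2 2 * cos θ ^ 2 := by
  simp only [sphPoint, dotProduct, mulVec, Fin.sum_univ_three, cons_val_zero, cons_val_one,
    cons_val_two, Nat.succ_eq_add_one, Nat.reduceAdd, tail_cons, head_cons, IsSymm.apply hQ 1 0,
    IsSymm.apply hQ 2 0, IsSymm.apply hQ 2 1]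
  ring

theorem integral_sphPoint_quadForm_sq {Q : Matrix (Fin 3) (Fin 3) ℝ} (hQ : Qᵀ = Q) :
    ∫ φ in (0:ℝ)..(2 * π), ∫ θ in (0:ℝ)..π, (sphPoint θ φ ⬝ᵥ Q *ᵥ sphPoint θ φ) ^ 2 * sin θ
      = 4 * π / 15 * (Q.trace ^ 2 + 2 * (Q * Q).trace) := by
  simp only [sphPoint_dotProduct_mulVec hQ, integral_sin_cos_quadratic_sq_mul_sin,
    integral_circle_moments, trace, diag, mul_apply, Fin.sum_univ_three, IsSymm.apply hQ 1 0,
    IsSymm.apply hQ 2 0, IsSymm.apply hQ 2 1]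
  ring

section Diagonalization

variable {n : Type*} [Fintype n]

theorem mulVec_dotProduct_mulVec_mulVec {α : Type*} [CommSemiring α] (M P : Matrix n n α)
    (x : n → α) :
    (M *ᵥ x) ⬝ᵥ (P *ᵥ (M *ᵥ x)) = x ⬝ᵥ ((Mᵀ * P * M) *ᵥ x) := by
  rw [← mulVec_mulVec, ← mulVec_mulVec, dotProduct_mulVec x, vecMul_transpose]

theorem transpose_submatrix_mul_mul_submatrix {α : Type*} [CommSemiring α] (U M : Matrix n n α)
    (σ : Equiv.Perm n) :
    (U.submatrix id σ)ᵀ * M * U.submatrix id σ = (Uᵀ * M * U).submatrix σ σ := by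
  ext i j
  simp [mul_apply]

variable [DecidableEq n]

theorem transpose_mul_mul_mul_transpose_mul_mul {R : Matrix n n ℝ} (hR : Rᵀ * R = 1)
    (M N : Matrix n n ℝ) : (Rᵀ * M * R) * (Rᵀ * N * R) = Rᵀ * (M * N) * R := by
  simp only [Matrix.mul_assoc, ← Matrix.mul_assoc R, mul_eq_one_comm.1 hR, Matrix.one_mul]

theorem trace_transpose_mul_mul {R : Matrix n n ℝ} (hR : Rᵀ * R = 1) (M : Matrix n n ℝ) :
    (Rᵀ * M * R).trace = M.trace := by
  rw [trace_mul_cycle, mul_eq_one_comm.1 hR, Matrix.one_mul]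

theorem exists_orthogonal_conj_eq_diagonal {Q : Matrix n n ℝ} (hQ : Qᵀ = Q) :
    ∃ U : Matrix n n ℝ, Uᵀ * U = 1 ∧ ∃ μ : n → ℝ, Uᵀ * Q * U = diagonal μ := by
  have hQ' : Q.IsHermitian := by rwa [IsHermitian, conjTranspose_eq_transpose_of_trivial]
  refine ⟨hQ'.eigenvectorUnitary, ?_, hQ'.eigenvalues, ?_⟩
  · simpa [star_eq_conjTranspose] using mem_unitaryGroup_iff'.1 hQ'.eigenvectorUnitary.2
  · simpa [Unitary.conjStarAlgAut_star_apply, star_eq_conjTranspose] using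
      hQ'.conjStarAlgAut_star_eigenvectorUnitary

theorem exists_orthogonal_conj_eq_diagonal_abs_le {Q : Matrix n n ℝ} (hQ : Qᵀ = Q) (j : n) :
    ∃ U : Matrix n n ℝ, Uᵀ * U = 1 ∧
      ∃ μ : n → ℝ, Uᵀ * Q * U = diagonal μ ∧ ∀ i, |μ i| ≤ |μ j| := by
  obtain ⟨U, hU, μ, hμ⟩ := exists_orthogonal_conj_eq_diagonal hQ
  obtain ⟨k, -, hk⟩ := Finset.exists_max_image Finset.univ (fun i => |μ i|) ⟨j, Finset.mem_univ j⟩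
  set σ := Equiv.swap k j
  refine ⟨U.submatrix id σ, ?_, μ ∘ σ, ?_, fun i => ?_⟩
  · simpa [hU] using transpose_submatrix_mul_mul_submatrix U 1 σ
  · rw [transpose_submatrix_mul_mul_submatrix, hμ, submatrix_diagonal_equiv]
  · simpa [σ] using hk (σ i) (Finset.mem_univ _)

theorem exists_rotation_conj_eq (hn : Odd (Fintype.card n)) {U : Matrix n n ℝ}
    (hU : Uᵀ * U = 1) (Q : Matrix n n ℝ) :
    ∃ R : Matrix n n ℝ, Rᵀ * R = 1 ∧ R.det = 1 ∧ Rᵀ * Q * R = Uᵀ * Q * U := by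
  have hdet : U.det = 1 ∨ U.det = -1 := by
    rw [← mul_self_eq_one_iff]
    simpa using congrArg det hU
  rcases hdet with h | h
  · exact ⟨U, hU, h, rfl⟩
  · refine ⟨-U, by simpa using hU, ?_, by simp⟩
    rw [det_neg, hn.neg_one_pow, h]
    norm_num

end Diagonalization

theorem sum_sq_le_two_mul_sq_of_add_add_eq_zero {a b c : ℝ} (h : a + b + c = 0)
    (ha : |a| ≤ |c|) (hb : |b| ≤ |c|) : a ^ 2 + b ^ 2 + c ^ 2 ≤ 2 * c ^ 2 := by
  rw [← sq_le_sq] at ha hb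
  have hc : c = -(a + b) := by linarith
  subst hc
  have h₁ : 0 ≤ b * (2 * a + b) := by nlinarith
  have h₂ : 0 ≤ a * (a + 2 * b) := by nlinarith
  nlinarith [mul_nonneg h₁ h₂]

theorem exists_Y20_Y22_expansion_of_diagonal {ν : Fin 3 → ℝ} (htr : ν 0 + ν 1 + ν 2 = 0)
    (hnorm : 8 * π / 15 * (ν 0 ^ 2 + ν 1 ^ 2 + ν 2 ^ 2) = 1)
    (h0 : |ν 0| ≤ |ν 2|) (h1 : |ν 1| ≤ |ν 2|) :
    ∃ A B : ℝ, A ^ 2 + B ^ 2 = 1 ∧ 3 / 7 ≤ A ^ 2 ∧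
      ∀ x : Fin 3 → ℝ, (x 0) ^ 2 + (x 1) ^ 2 + (x 2) ^ 2 = 1 →
        x ⬝ᵥ diagonal ν *ᵥ x = A * Y20 x + B * Y22 x := by
  have hA : (ν 2 / (2 * √(5 / (16 * π)))) ^ 2 = 4 * π / 5 * ν 2 ^ 2 := by
    rw [div_pow, mul_pow, sq_sqrt (by positivity)]
    field_simp
    ring
  have hB : ((ν 0 - ν 1) / (2 * √(15 / (16 * π)))) ^ 2 = 4 * π / 15 * (ν 0 - ν 1) ^ 2 := by
    rw [div_pow, mul_pow, sq_sqrt (by positivity)]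
    field_simp
    ring
  refine ⟨ν 2 / (2 * √(5 / (16 * π))), (ν 0 - ν 1) / (2 * √(15 / (16 * π))), ?_, ?_, ?_⟩
  · rw [hA, hB]
    linear_combination hnorm + 4 * π / 15 * (ν 2 - ν 0 - ν 1) * htr
  · have := mul_le_mul_of_nonneg_left (sum_sq_le_two_mul_sq_of_add_add_eq_zero htr h0 h1)
      pi_pos.le
    rw [hA]
    linarith
  · intro x hx
    simp only [dotProduct, mulVec_diagonal, Fin.sum_univ_three, Y20, Y22]
    field_simp
    linear_combination (-ν 2) * hx + (x 0 ^ 2 + x 1 ^ 2) * htr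

/-- **Normal form of a normalized second-shell vorticity.**
If `Q` is a real symmetric traceless `3×3` matrix and `ω(x) = xᵀQx` is `L²`-normalized on the
unit sphere, then there is a rotation `R ∈ SO(3)` and `A, B` with `A² + B² = 1`, `3/7 ≤ A²`
such that `ω(Rx) = A Y_{2,0}(x) + B Y_{2,2}(x)` for all `x ∈ S²`. -/
theorem stmt2 (Q : Matrix (Fin 3) (Fin 3) ℝ) (hsym : Qᵀ = Q) (htrace : Q.trace = 0)
    (hnorm : (∫ φ in (0:ℝ)..(2 * π), ∫ θ in (0:ℝ)..π,
      ((sphPoint θ φ) ⬝ᵥ Q.mulVec (sphPoint θ φ)) ^ 2 * Real.sin θ) = 1) :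
    ∃ R : Matrix (Fin 3) (Fin 3) ℝ, Rᵀ * R = 1 ∧ R.det = 1 ∧
      ∃ A B : ℝ, A ^ 2 + B ^ 2 = 1 ∧ 3 / 7 ≤ A ^ 2 ∧
        ∀ x : Fin 3 → ℝ, (x 0) ^ 2 + (x 1) ^ 2 + (x 2) ^ 2 = 1 →
          (R.mulVec x) ⬝ᵥ Q.mulVec (R.mulVec x) = A * Y20 x + B * Y22 x := by
  obtain ⟨U, hU, ν, hUQU, hmax⟩ := exists_orthogonal_conj_eq_diagonal_abs_le hsym 2
  obtain ⟨R, hR, hdet, hRQR⟩ := exists_rotation_conj_eq (by decide) hU Q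
  have htr : ν 0 + ν 1 + ν 2 = 0 := by
    rw [← htrace, ← trace_transpose_mul_mul hU, hUQU, trace_diagonal, Fin.sum_univ_three]
  have hsq : 8 * π / 15 * (ν 0 ^ 2 + ν 1 ^ 2 + ν 2 ^ 2) = 1 := by
    have hQQ : (Q * Q).trace = ν 0 ^ 2 + ν 1 ^ 2 + ν 2 ^ 2 := by
      rw [← trace_transpose_mul_mul hU, ← transpose_mul_mul_mul_transpose_mul_mul hU, hUQU,
        diagonal_mul_diagonal, trace_diagonal, Fin.sum_univ_three]
      ring
    rw [integral_sphPoint_quadForm_sq hsym, htrace, hQQ] at hnorm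
    linear_combination hnorm
  obtain ⟨A, B, hAB, hA, hform⟩ := exists_Y20_Y22_expansion_of_diagonal htr hsq (hmax 0) (hmax 1)
  refine ⟨R, hR, hdet, A, B, hAB, hA, fun x hx => ?_⟩
  rw [mulVec_dotProduct_mulVec_mulVec, hRQR, hUQU]
  exact hform x hx
end

section
/- For all real numbers A and B, the surface integral over the unit sphere of the cube of A·Y_{2,0} + B·Y_{2,2} satisfies ∫_{S²} (A·Y_{2,0} + B·Y_{2,2})³ dS = (1/7)·√(5/π)·A·(A² − 3B²). -/
/-!
Integrating first in θ, the substitution t = cos θ turns the θ-integral of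
(A Y₂₀ + B Y₂₂)³ into the integral of a cubic in t² over [-1, 1], which is a cubic
polynomial in cos 2φ. Over the full period 0 ≤ φ ≤ 2π only its constant and
cos² 2φ terms survive, with weights 2π and π.
-/

open Real intervalIntegral

theorem integral_comp_cos_mul_sin {f : ℝ → ℝ} (hf : Continuous f) :
    ∫ θ in (0:ℝ)..π, f (cos θ) * sin θ = ∫ t in (-1:ℝ)..1, f t := by
  have h := integral_comp_mul_deriv (a := 0) (b := π) (f := cos) (f' := fun θ => -sin θ)
    (fun θ _ => hasDerivAt_cos θ) (by fun_prop) hf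
  simp only [Function.comp_apply, mul_neg, integral_neg, cos_zero, cos_pi] at h
  rw [← neg_neg (∫ θ in (0:ℝ)..π, _), h, integral_symm, neg_neg]

theorem integral_mul_sq_add_pow_three (a b : ℝ) :
    ∫ t in (-1:ℝ)..1, (a * t ^ 2 + b) ^ 3 =
      2 / 7 * a ^ 3 + 6 / 5 * a ^ 2 * b + 2 * a * b ^ 2 + 2 * b ^ 3 := by
  have hexpand (t : ℝ) : (a * t ^ 2 + b) ^ 3 =
      a ^ 3 * t ^ 6 + 3 * a ^ 2 * b * t ^ 4 + 3 * a * b ^ 2 * t ^ 2 + b ^ 3 := by ring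
  simp only [hexpand]
  rw [integral_add, integral_add, integral_add]
  all_goals try exact Continuous.intervalIntegrable (by fun_prop) _ _
  norm_num [integral_pow]
  ring

theorem integral_three_cos_sq_sub_one_add_sin_sq_pow_three_mul_sin (α β : ℝ) :
    ∫ θ in (0:ℝ)..π, (α * (3 * cos θ ^ 2 - 1) + β * sin θ ^ 2) ^ 3 * sin θ =
      32 / 35 * α ^ 3 + 16 / 7 * α ^ 2 * β - 64 / 35 * α * β ^ 2 + 32 / 35 * β ^ 3 := by
  have hcos (θ : ℝ) : α * (3 * cos θ ^ 2 - 1) + β * sin θ ^ 2 =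
      (3 * α - β) * cos θ ^ 2 + (β - α) := by
    rw [sin_sq]; ring
  simp only [hcos]
  rw [integral_comp_cos_mul_sin (f := fun t => ((3 * α - β) * t ^ 2 + (β - α)) ^ 3) (by fun_prop),
    integral_mul_sq_add_pow_three]
  ring

theorem integral_cos_two_mul_cubic (k₀ k₁ k₂ k₃ : ℝ) :
    ∫ φ in (0:ℝ)..2 * π, (k₀ + k₁ * cos (2 * φ) + k₂ * cos (2 * φ) ^ 2 + k₃ * cos (2 * φ) ^ 3)
      = 2 * π * k₀ + π * k₂ := by
  have hsin : sin (2 * (2 * π)) = 0 := by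
    rw [← mul_assoc]; exact_mod_cast sin_nat_mul_pi 4
  have hcomp (n : ℕ) : ∫ φ in (0:ℝ)..2 * π, cos (2 * φ) ^ n =
      2⁻¹ * ∫ x in (0:ℝ)..2 * (2 * π), cos x ^ n := by
    simpa using integral_comp_mul_left (fun x => cos x ^ n) two_ne_zero (a := 0) (b := 2 * π)
  have h₁ : ∫ φ in (0:ℝ)..2 * π, cos (2 * φ) = 0 := by
    simp [hsin]
  have h₂ : ∫ φ in (0:ℝ)..2 * π, cos (2 * φ) ^ 2 = π := by
    rw [hcomp, integral_cos_sq, hsin, sin_zero]; ring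
  have h₃ : ∫ φ in (0:ℝ)..2 * π, cos (2 * φ) ^ 3 = 0 := by
    rw [hcomp, integral_cos_pow (n := 1)]; simp [hsin]
  rw [integral_add, integral_add, integral_add]
  all_goals try exact Continuous.intervalIntegrable (by fun_prop) _ _
  simp only [integral_const_mul, integral_const, h₁, h₂, h₃, smul_eq_mul]
  ring

/-- **The cubic Casimir of `A Y_{2,0} + B Y_{2,2}`.**
`∫_{S²} (A Y_{2,0} + B Y_{2,2})³ dS = (1/7)√(5/π) A (A² − 3B²)`. -/
theorem stmt7 (A B : ℝ) :
    (∫ φ in (0:ℝ)..(2 * π), ∫ θ in (0:ℝ)..π,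
      (A * (Real.sqrt (5 / (16 * π)) * (3 * (Real.cos θ) ^ 2 - 1)) +
       B * (Real.sqrt (15 / (16 * π)) * (Real.sin θ) ^ 2 * Real.cos (2 * φ))) ^ 3 *
        Real.sin θ) =
    (1 / 7) * Real.sqrt (5 / π) * A * (A ^ 2 - 3 * B ^ 2) := by
  set a := √(5 / (16 * π))
  set b := √(15 / (16 * π))
  have hθ (φ : ℝ) : ∫ θ in (0:ℝ)..π,
      (A * (a * (3 * cos θ ^ 2 - 1)) + B * (b * sin θ ^ 2 * cos (2 * φ))) ^ 3 * sin θ =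
      32 / 35 * (A * a) ^ 3 + 16 / 7 * (A * a) ^ 2 * (B * b) * cos (2 * φ)
        + -(64 / 35 * (A * a) * (B * b) ^ 2) * cos (2 * φ) ^ 2
        + 32 / 35 * (B * b) ^ 3 * cos (2 * φ) ^ 3 := by
    have hform (θ : ℝ) :
        A * (a * (3 * cos θ ^ 2 - 1)) + B * (b * sin θ ^ 2 * cos (2 * φ)) =
          A * a * (3 * cos θ ^ 2 - 1) + B * b * cos (2 * φ) * sin θ ^ 2 := by ring
    simp only [hform, integral_three_cos_sq_sub_one_add_sin_sq_pow_three_mul_sin]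
    ring
  have ha : π * a ^ 2 = 5 / 16 := by
    rw [sq_sqrt (by positivity)]; field_simp
  have hb : π * b ^ 2 = 15 / 16 := by
    rw [sq_sqrt (by positivity)]; field_simp
  have hsqrt : √(5 / π) = 4 * a := by
    rw [show 5 / π = 4 ^ 2 * (5 / (16 * π)) by field_simp; ring, sqrt_mul (by positivity),
      sqrt_sq (by norm_num)]
  simp only [hθ, integral_cos_two_mul_cubic, hsqrt]
  linear_combination (64 / 35 * A ^ 3 * a) * ha - (64 / 35 * A * a * B ^ 2) * hb
end
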